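/- arXiv:2109.02267 — 2 statements merged into one kernel-verified Lean document; each statement's English description precedes it below -/
import Mathlib

section
/- Let r, r' ≥ 2 and let k = (k₁,…,k_{r−1}), k' = (k'₁,…,k'_{r'−1}) be tuples of elements of a set T, and let K ∈ T. Define, for a tuple m of elements of T (each element k_j carrying a 'size' ⟨ℓ_j⟩ ≥ 1), Υ(m) := max({1} ∪ {⟨ℓ_j⟩ : the entry m_j occurs exactly once in m}). Then Υ(k,k') ≤ Υ(k,K) · Υ(k',K), where (k,K) denotes the tuple k with K appended, and (k,k') the concatenation of k and k'. -/
/-- `upsilon size l` is the largest size of an entry of `l` occurring exactly once in `l`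
(and `1` if there is none). -/
noncomputable def upsilon {T : Type*} [DecidableEq T] (size : T → ℝ) (l : List T) : ℝ :=
  ((l.filter (fun a => l.count a = 1)).map size).foldr max 1

theorem List.foldr_max_le_iff {α : Type*} [LinearOrder α] {l : List α} {b x : α} :
    l.foldr max b ≤ x ↔ b ≤ x ∧ ∀ a ∈ l, a ≤ x := by
  induction l with
  | nil => simp
  | cons y l ih => simp [ih, and_left_comm]

theorem List.count_append_singleton_eq_one_or {α : Type*} [DecidableEq α] {k k' : List α}
    {b : α} (K : α) (h : (k ++ k').count b = 1) :
    (k ++ [K]).count b = 1 ∨ (k' ++ [K]).count b = 1 := by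
  simp only [List.count_append, List.count_singleton, beq_iff_eq] at h ⊢
  split_ifs <;> omega

section Upsilon

variable {T : Type*} [DecidableEq T] (size : T → ℝ)

theorem upsilon_le_iff {l : List T} {x : ℝ} :
    upsilon size l ≤ x ↔ 1 ≤ x ∧ ∀ b, l.count b = 1 → size b ≤ x := by
  simp only [upsilon, List.foldr_max_le_iff, List.forall_mem_map, List.mem_filter,
    decide_eq_true_eq, and_imp]
  refine and_congr_right fun _ => forall_congr' fun b => ⟨fun h hb => h ?_ hb, fun h _ => h⟩
  exact List.count_pos_iff.mp (by omega)

theorem one_le_upsilon (l : List T) : 1 ≤ upsilon size l :=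
  ((upsilon_le_iff size).mp le_rfl).1

theorem le_upsilon_of_count_eq_one {l : List T} {b : T} (hb : l.count b = 1) :
    size b ≤ upsilon size l :=
  ((upsilon_le_iff size).mp le_rfl).2 b hb

end Upsilon

theorem stmt_15_general {T : Type*} [DecidableEq T] (size : T → ℝ)
    (k k' : List T) (K : T) :
    upsilon size (k ++ k') ≤ upsilon size (k ++ [K]) * upsilon size (k' ++ [K]) := by
  have hk := one_le_upsilon size (k ++ [K])
  have hk' := one_le_upsilon size (k' ++ [K])
  refine (upsilon_le_iff size).mpr ⟨one_le_mul_of_one_le_of_one_le hk hk', fun b hb => ?_⟩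
  rcases List.count_append_singleton_eq_one_or K hb with hb | hb
  · exact (le_upsilon_of_count_eq_one size hb).trans
      (le_mul_of_one_le_right (zero_le_one.trans hk) hk')
  · exact (le_upsilon_of_count_eq_one size hb).trans
      (le_mul_of_one_le_left (zero_le_one.trans hk') hk)

/-- Submultiplicativity of `Υ` under concatenation: `Υ(k,k') ≤ Υ(k,K)·Υ(k',K)`. -/
theorem stmt_15 {T : Type*} [DecidableEq T] (size : T → ℝ) (hsize : ∀ t, 1 ≤ size t)
    (r r' : ℕ) (hr : 2 ≤ r) (hr' : 2 ≤ r')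
    (k k' : List T) (hk : k.length = r - 1) (hk' : k'.length = r' - 1) (K : T) :
    upsilon size (k ++ k') ≤ upsilon size (k ++ [K]) * upsilon size (k' ++ [K]) :=
  stmt_15_general size k k' K
end

section
/- Let M ≥ 2 and r ≥ 2 be integers and let T_M = {(ℓ,m) : 0 ≤ ℓ ≤ M, |m| ≤ ℓ}. Let H : ℂ^{T_M} → ℝ be a homogeneous polynomial of degree r with symmetric coefficients, H(u) = ∑_{σ∈{−1,1}^r} ∑_{k∈T_M^r} H_k^σ u_{k₁}^{σ₁}⋯u_{k_r}^{σ_r} (where u^{1} = u and u^{−1} = ū), and suppose |H_k^σ| ≤ A/√(⟨ℓ₁⟩⋯⟨ℓ_r⟩) for all k and σ. Then for all u ∈ ℂ^{T_M}, ‖∇H(u)‖_{h^{−1/2}} ≤ C_r · (log M)^{r/2} · A · ‖u‖_{h^{1/2}}^{r−1}, where ‖u‖²_{h^s} = ∑_{k=(ℓ,m)∈T_M} ⟨ℓ⟩^{2s}|u_k|², ⟨ℓ⟩ = √(1+ℓ²), and C_r depends only on r. -/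
/-- The index set `T_M = {(ℓ,m) : 0 ≤ ℓ ≤ M, |m| ≤ ℓ}`, realized as a sigma type
(the fiber over `ℓ` has `2ℓ+1` elements). -/
abbrev TM (M : ℕ) := Σ ℓ : Fin (M + 1), Fin (2 * (ℓ : ℕ) + 1)

/-!
Testing the gradient `g = ∇H(u)` against `v = δ_k · g_k / |g_k|` bounds `|g_k|` by the
derivative of `H` at `u` in that direction. After the product rule, inserting the coefficient
bound and summing over the free indices factorises this into
`2^r r A ⟨ℓ_k⟩^{-1/2} (∑_x ⟨ℓ_x⟩^{-1/2} |u_x|)^{r-1}`. By Cauchy–Schwarz the last sum is at most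
`S^{1/2} ‖u‖_{h^{1/2}}` with `S = ∑_x ⟨ℓ_x⟩^{-2}`, and summing the square of the pointwise bound
against `⟨ℓ_k⟩^{-1}` gives `‖g‖_{h^{-1/2}} ≤ 2^r r A S^{r/2} ‖u‖_{h^{1/2}}^{r-1}`, for any weight.
For `⟨ℓ⟩ = √(1 + ℓ²)` on `T_M`, `S = ∑_{ℓ ≤ M} (2ℓ+1)/(1+ℓ²)` is a harmonic sum, `O(log M)`.
-/

open Finset ComplexConjugate

/-- `z ↦ z^σ` of the paper, `σ = true` standing for the exponent `1` and `σ = false` for `-1`. -/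
noncomputable def conjUnless (b : Bool) : ℂ →L[ℝ] ℂ :=
  bif b then ContinuousLinearMap.id ℝ ℂ else Complex.conjCLE.toContinuousLinearMap

lemma conjUnless_apply (b : Bool) (z : ℂ) : conjUnless b z = if b then z else conj z := by
  cases b <;> rfl

lemma norm_conjUnless_apply (b : Bool) (z : ℂ) : ‖conjUnless b z‖ = ‖z‖ := by
  cases b <;> simp [conjUnless_apply]

lemma Fintype.sum_pi_prod_erase_mul {κ ι R : Type*} [Fintype κ] [DecidableEq κ] [Fintype ι]
    [CommSemiring R] (a b : ι → R) (i : κ) :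
    ∑ k : κ → ι, (∏ j ∈ univ.erase i, a (k j)) * b (k i)
      = (∑ x, a x) ^ (Fintype.card κ - 1) * ∑ x, b x := by
  let f : κ → ι → R := Function.update (fun _ => a) i b
  have hfi : f i = b := Function.update_self ..
  have hfj : ∀ j ∈ univ.erase i, f j = a := fun j hj =>
    Function.update_of_ne (ne_of_mem_erase hj) ..
  have hf : ∀ k : κ → ι, (∏ j ∈ univ.erase i, a (k j)) * b (k i) = ∏ j, f j (k j) := by
    intro k
    rw [← mul_prod_erase univ _ (mem_univ i), mul_comm, hfi]
    exact congrArg (b (k i) * ·) (Finset.prod_congr rfl fun j hj => by rw [hfj j hj])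
  rw [Fintype.sum_congr _ _ hf, ← Fintype.prod_sum, ← mul_prod_erase univ _ (mem_univ i),
    mul_comm, hfi, Finset.prod_congr rfl fun j hj => by rw [hfj j hj], prod_const,
    card_erase_of_mem (mem_univ i), card_univ]

section WeightedEstimate

variable {ι : Type*} [Fintype ι] {r : ℕ}

noncomputable def realPoly (Hc : (Fin r → ι) → (Fin r → Bool) → ℂ) (w : ι → ℂ) : ℝ :=
  ∑ σ : Fin r → Bool, ∑ k : Fin r → ι, (Hc k σ * ∏ j, conjUnless (σ j) (w (k j))).re

lemma hasFDerivAt_realPoly (Hc : (Fin r → ι) → (Fin r → Bool) → ℂ) (u : ι → ℂ) :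
    HasFDerivAt (realPoly Hc)
      (∑ σ : Fin r → Bool, ∑ k : Fin r → ι, Complex.reCLM.comp (Hc k σ •
        ∑ i, (∏ j ∈ univ.erase i, conjUnless (σ j) (u (k j))) •
          (conjUnless (σ i)).comp (ContinuousLinearMap.proj (k i)))) u := by
  refine HasFDerivAt.fun_sum fun σ _ => HasFDerivAt.fun_sum fun k _ => ?_
  refine Complex.reCLM.hasFDerivAt.comp u (HasFDerivAt.const_mul ?_ (Hc k σ))
  exact HasFDerivAt.finsetProd fun i _ =>
    ((conjUnless (σ i)).comp
      (ContinuousLinearMap.proj (R := ℝ) (φ := fun _ : ι => ℂ) (k i))).hasFDerivAt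

lemma fderiv_realPoly_apply (Hc : (Fin r → ι) → (Fin r → Bool) → ℂ) (u v : ι → ℂ) :
    fderiv ℝ (realPoly Hc) u v = ∑ σ : Fin r → Bool, ∑ k : Fin r → ι,
      (Hc k σ * ∑ i, (∏ j ∈ univ.erase i, conjUnless (σ j) (u (k j))) *
        conjUnless (σ i) (v (k i))).re := by
  simp [(hasFDerivAt_realPoly Hc u).fderiv]

lemma fderiv_realPoly_apply_le (Hc : (Fin r → ι) → (Fin r → Bool) → ℂ) (u v : ι → ℂ) :
    fderiv ℝ (realPoly Hc) u v ≤ ∑ σ : Fin r → Bool, ∑ k : Fin r → ι,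
      ‖Hc k σ‖ * ∑ i, (∏ j ∈ univ.erase i, ‖u (k j)‖) * ‖v (k i)‖ := by
  rw [fderiv_realPoly_apply]
  gcongr with σ _ k _
  refine (Complex.re_le_norm _).trans ?_
  rw [norm_mul]
  gcongr
  refine (norm_sum_le _ _).trans_eq (sum_congr rfl fun i _ => ?_)
  simp [norm_prod, norm_conjUnless_apply]

lemma fderiv_realPoly_apply_le_of_norm_le {Hc : (Fin r → ι) → (Fin r → Bool) → ℂ} {A : ℝ}
    {ρ : ι → ℝ} (hH : ∀ k σ, ‖Hc k σ‖ ≤ A * ∏ j, ρ (k j)) (u v : ι → ℂ) :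
    fderiv ℝ (realPoly Hc) u v
      ≤ 2 ^ r * r * A * (∑ x, ρ x * ‖u x‖) ^ (r - 1) * ∑ x, ρ x * ‖v x‖ := by
  have hterm : ∀ σ k i, ‖Hc k σ‖ * ((∏ j ∈ univ.erase i, ‖u (k j)‖) * ‖v (k i)‖)
      ≤ A * ((∏ j ∈ univ.erase i, ρ (k j) * ‖u (k j)‖) * (ρ (k i) * ‖v (k i)‖)) := by
    intro σ k i
    calc ‖Hc k σ‖ * ((∏ j ∈ univ.erase i, ‖u (k j)‖) * ‖v (k i)‖)
        ≤ (A * ∏ j, ρ (k j)) * ((∏ j ∈ univ.erase i, ‖u (k j)‖) * ‖v (k i)‖) := by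
          gcongr; exact hH k σ
      _ = A * ((∏ j ∈ univ.erase i, ρ (k j) * ‖u (k j)‖) * (ρ (k i) * ‖v (k i)‖)) := by
          rw [← mul_prod_erase univ _ (mem_univ i), prod_mul_distrib]; ring
  calc fderiv ℝ (realPoly Hc) u v
      ≤ ∑ σ : Fin r → Bool, ∑ k : Fin r → ι,
          ‖Hc k σ‖ * ∑ i, (∏ j ∈ univ.erase i, ‖u (k j)‖) * ‖v (k i)‖ :=
        fderiv_realPoly_apply_le Hc u v
    _ ≤ ∑ σ : Fin r → Bool, ∑ i : Fin r, A * ∑ k : Fin r → ι,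
          (∏ j ∈ univ.erase i, ρ (k j) * ‖u (k j)‖) * (ρ (k i) * ‖v (k i)‖) := by
        refine sum_le_sum fun σ _ => ?_
        simp_rw [mul_sum]
        rw [sum_comm]
        exact sum_le_sum fun i _ => sum_le_sum fun k _ => hterm σ k i
    _ = 2 ^ r * r * A * (∑ x, ρ x * ‖u x‖) ^ (r - 1) * ∑ x, ρ x * ‖v x‖ := by
        simp only [Fintype.sum_pi_prod_erase_mul (fun x => ρ x * ‖u x‖) (fun x => ρ x * ‖v x‖),
          sum_const, card_univ, Fintype.card_fin, Fintype.card_fun, Fintype.card_bool, nsmul_eq_mul]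
        push_cast
        ring

lemma norm_le_of_re_sum_mul_conj_le {g : ι → ℂ} {ρ : ι → ℝ} {K : ℝ} (hK : 0 ≤ K) (hρ : 0 ≤ ρ)
    (h : ∀ v : ι → ℂ, ∑ x, (g x * conj (v x)).re ≤ K * ∑ x, ρ x * ‖v x‖) (x : ι) :
    ‖g x‖ ≤ K * ρ x := by
  classical
  set c : ℂ := g x / ‖g x‖
  set v : ι → ℂ := Pi.single x c
  have hpair : ∑ y, (g y * conj (v y)).re = ‖g x‖ := by
    rw [Fintype.sum_eq_single x fun y hy => by simp [v, Pi.single_eq_of_ne hy]]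
    simp only [v, Pi.single_eq_same, c, map_div₀, Complex.conj_ofReal, ← mul_div_assoc,
      Complex.mul_conj']
    norm_cast
    rw [sq, mul_self_div_self]
  have hweight : ∑ y, ρ y * ‖v y‖ = ρ x * ‖c‖ := by
    rw [Fintype.sum_eq_single x fun y hy => by simp [v, Pi.single_eq_of_ne hy]]
    simp [v]
  have hc : ‖c‖ ≤ 1 := by
    simpa [c, norm_div] using div_self_le_one ‖g x‖
  calc ‖g x‖ ≤ K * (ρ x * ‖c‖) := hpair ▸ hweight ▸ h v
    _ ≤ K * ρ x := mul_le_mul_of_nonneg_left (mul_le_of_le_one_right (hρ x) hc) hK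

lemma sum_inv_sqrt_mul_le {W : ι → ℝ} (hW : 0 ≤ W) (a : ι → ℝ) :
    ∑ x, (√(W x))⁻¹ * a x ≤ √(∑ x, (W x ^ 2)⁻¹) * √(∑ x, W x * a x ^ 2) := by
  have h : ∀ x, (√(W x))⁻¹ * a x = (W x)⁻¹ * (√(W x) * a x) := fun x => by
    rw [← mul_assoc, inv_mul_eq_div (W x), Real.sqrt_div_self', one_div]
  simp_rw [h]
  convert Real.sum_mul_le_sqrt_mul_sqrt univ (fun x => (W x)⁻¹) (fun x => √(W x) * a x) using 4
  · rw [inv_pow]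
  · rw [mul_pow, Real.sq_sqrt (hW _)]

lemma sqrt_sum_inv_mul_sq_le {W a : ι → ℝ} (hW : 0 ≤ W) (ha : 0 ≤ a) {K : ℝ} (hK : 0 ≤ K)
    (haK : ∀ x, a x ≤ K * (√(W x))⁻¹) :
    √(∑ x, (W x)⁻¹ * a x ^ 2) ≤ K * √(∑ x, (W x ^ 2)⁻¹) := by
  rw [← Real.sqrt_sq hK, ← Real.sqrt_mul (sq_nonneg K), mul_sum]
  refine Real.sqrt_le_sqrt (sum_le_sum fun x _ => ?_)
  calc (W x)⁻¹ * a x ^ 2 ≤ (W x)⁻¹ * (K * (√(W x))⁻¹) ^ 2 :=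
        mul_le_mul_of_nonneg_left (pow_le_pow_left₀ (ha x) (haK x) 2) (inv_nonneg.2 (hW x))
    _ = K ^ 2 * (W x ^ 2)⁻¹ := by
        rw [mul_pow, inv_pow, Real.sq_sqrt (hW x)]; ring

theorem norm_gradient_realPoly_le (hr : r ≠ 0) {W : ι → ℝ}
    (hW : 0 ≤ W) {A : ℝ} (hA : 0 ≤ A) {Hc : (Fin r → ι) → (Fin r → Bool) → ℂ}
    (hH : ∀ k σ, ‖Hc k σ‖ ≤ A / √(∏ j, W (k j))) {u g : ι → ℂ}
    (hg : ∀ v, fderiv ℝ (realPoly Hc) u v = ∑ x, (g x * conj (v x)).re) :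
    √(∑ x, (W x)⁻¹ * ‖g x‖ ^ 2)
      ≤ 2 ^ r * r * A * √(∑ x, (W x ^ 2)⁻¹) ^ r * √(∑ x, W x * ‖u x‖ ^ 2) ^ (r - 1) := by
  set ρ : ι → ℝ := fun x => (√(W x))⁻¹
  set L := ∑ x, ρ x * ‖u x‖
  have hcoef : ∀ k σ, ‖Hc k σ‖ ≤ A * ∏ j, ρ (k j) := fun k σ => (hH k σ).trans_eq <| by
    rw [Real.sqrt_prod _ fun j _ => hW _, div_eq_mul_inv, prod_inv_distrib]
  have hK : 0 ≤ 2 ^ r * r * A * L ^ (r - 1) := by positivity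
  have hg_le : ∀ x, ‖g x‖ ≤ 2 ^ r * r * A * L ^ (r - 1) * ρ x :=
    norm_le_of_re_sum_mul_conj_le hK (fun x => by positivity) fun v =>
      hg v ▸ fderiv_realPoly_apply_le_of_norm_le hcoef u v
  calc √(∑ x, (W x)⁻¹ * ‖g x‖ ^ 2)
      ≤ 2 ^ r * r * A * L ^ (r - 1) * √(∑ x, (W x ^ 2)⁻¹) :=
        sqrt_sum_inv_mul_sq_le hW (fun x => norm_nonneg _) hK hg_le
    _ ≤ 2 ^ r * r * A * (√(∑ x, (W x ^ 2)⁻¹) * √(∑ x, W x * ‖u x‖ ^ 2)) ^ (r - 1)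
          * √(∑ x, (W x ^ 2)⁻¹) := by
        gcongr
        exact sum_inv_sqrt_mul_le hW _
    _ = _ := by rw [mul_pow, ← pow_sub_one_mul hr (√(∑ x, (W x ^ 2)⁻¹))]; ring

end WeightedEstimate

lemma two_mul_add_one_mul_inv_le (n : ℕ) :
    (2 * (n : ℝ) + 1) * (1 + (n : ℝ) ^ 2)⁻¹ ≤ 3 * ((n : ℝ) + 1)⁻¹ := by
  rw [← div_eq_mul_inv, ← div_eq_mul_inv, div_le_div_iff₀ (by positivity) (by positivity)]
  -- this is `(n - 1) (n - 2) ≥ 0`, true for integers but not for all reals `n ≥ 0`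
  rcases le_or_gt n 1 with hn | hn
  · have : (n : ℝ) ≤ 1 := by exact_mod_cast hn
    nlinarith
  · have : (2 : ℝ) ≤ n := by exact_mod_cast hn
    nlinarith

lemma sum_inv_one_add_sq_le_log (M : ℕ) (hM : 2 ≤ M) :
    ∑ kk : TM M, (1 + ((kk.1 : ℕ) : ℝ) ^ 2)⁻¹ ≤ 12 * Real.log M := by
  have hM' : (2 : ℝ) ≤ M := by exact_mod_cast hM
  have hlogM : 1 / 2 < Real.log M :=
    lt_of_lt_of_le (by linarith [Real.log_two_gt_d9]) (Real.log_le_log two_pos hM')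
  have hlog_succ : Real.log (M + 1 : ℕ) ≤ 2 * Real.log M :=
    calc Real.log (M + 1 : ℕ) ≤ Real.log ((M : ℝ) ^ 2) :=
          Real.log_le_log (by positivity) (by push_cast; nlinarith)
      _ = 2 * Real.log M := by simp [Real.log_pow]
  calc ∑ kk : TM M, (1 + ((kk.1 : ℕ) : ℝ) ^ 2)⁻¹
      = ∑ ℓ : Fin (M + 1), (2 * ((ℓ : ℕ) : ℝ) + 1) * (1 + ((ℓ : ℕ) : ℝ) ^ 2)⁻¹ := by
        simp [Fintype.sum_sigma]
    _ ≤ ∑ ℓ : Fin (M + 1), 3 * (((ℓ : ℕ) : ℝ) + 1)⁻¹ :=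
        sum_le_sum fun ℓ _ => two_mul_add_one_mul_inv_le ℓ
    _ = 3 * harmonic (M + 1) := by
        rw [← mul_sum, Fin.sum_univ_eq_sum_range (fun i => ((i : ℝ) + 1)⁻¹)]
        simp [harmonic]
    _ ≤ 3 * (1 + Real.log (M + 1 : ℕ)) := by gcongr; exact harmonic_le_one_add_log _
    _ ≤ 12 * Real.log M := by linarith

/-- Multilinear vector field estimate in `h^{-1/2}` (Lemma 4.4): if the coefficients of a
real-valued homogeneous polynomial `H` of degree `r` on `ℂ^{T_M}` satisfy
`|H_k^σ| ≤ A/√(⟨ℓ₁⟩⋯⟨ℓ_r⟩)`, then `‖∇H(u)‖_{h^{-1/2}} ≤ C_r (log M)^{r/2} A ‖u‖_{h^{1/2}}^{r-1}`,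
where the gradient is taken with respect to the real `ℓ²` inner product
`(g,v) = Re ∑_k g_k conj v_k`. -/
theorem stmt_16 (r : ℕ) (hr : 2 ≤ r) :
    ∃ C > 0, ∀ M : ℕ, 2 ≤ M → ∀ A : ℝ,
    ∀ Hc : (Fin r → TM M) → (Fin r → Bool) → ℂ,
    -- symmetry of the coefficients
    (∀ (k : Fin r → TM M) (σ : Fin r → Bool) (ρ : Equiv.Perm (Fin r)),
        Hc (k ∘ ρ) (σ ∘ ρ) = Hc k σ) →
    -- reality condition (H takes real values)
    (∀ (k : Fin r → TM M) (σ : Fin r → Bool),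
        Hc k (fun j => !σ j) = (starRingEnd ℂ) (Hc k σ)) →
    -- coefficient bound
    (∀ (k : Fin r → TM M) (σ : Fin r → Bool),
        ‖Hc k σ‖ ≤ A / Real.sqrt (∏ j, Real.sqrt (1 + (((k j).1 : ℕ) : ℝ) ^ 2))) →
    ∀ u g : TM M → ℂ,
    -- `g` is the gradient of `H` at `u` for the real `ℓ²` inner product
    (∀ v : TM M → ℂ,
        fderiv ℝ (fun w : TM M → ℂ =>
            ∑ σ : Fin r → Bool, ∑ k : Fin r → TM M,
              (Hc k σ *
                ∏ j, (if σ j then w (k j) else (starRingEnd ℂ) (w (k j)))).re) u v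
          = ∑ kk : TM M, (g kk * (starRingEnd ℂ) (v kk)).re) →
    Real.sqrt (∑ kk : TM M,
        (Real.sqrt (1 + ((kk.1 : ℕ) : ℝ) ^ 2))⁻¹ * ‖g kk‖ ^ 2)
      ≤ C * Real.log M ^ ((r : ℝ) / 2) * A *
        Real.sqrt (∑ kk : TM M,
            Real.sqrt (1 + ((kk.1 : ℕ) : ℝ) ^ 2) * ‖u kk‖ ^ 2) ^ (r - 1) := by
  refine ⟨2 ^ r * r * √12 ^ r, by positivity, ?_⟩
  intro M hM A Hc _ _ hbound u g hgrad
  have hA : 0 ≤ A := by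
    simpa using (norm_nonneg _).trans (hbound (fun _ => ⟨0, 0⟩) (fun _ => true))
  have hpoly : (fun w : TM M → ℂ => ∑ σ : Fin r → Bool, ∑ k : Fin r → TM M,
      (Hc k σ * ∏ j, (if σ j then w (k j) else (starRingEnd ℂ) (w (k j)))).re) = realPoly Hc := by
    funext w
    simp only [realPoly, conjUnless_apply]
  rw [hpoly] at hgrad
  have hS : √(∑ kk : TM M, (√(1 + ((kk.1 : ℕ) : ℝ) ^ 2) ^ 2)⁻¹) ≤ √12 * √(Real.log M) := by
    rw [← Real.sqrt_mul (by norm_num)]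
    gcongr
    have hsq : ∀ kk : TM M, √(1 + ((kk.1 : ℕ) : ℝ) ^ 2) ^ 2 = 1 + ((kk.1 : ℕ) : ℝ) ^ 2 :=
      fun kk => Real.sq_sqrt (by positivity)
    simpa only [hsq] using sum_inv_one_add_sq_le_log M hM
  have hlog_pow : √(Real.log M) ^ r = Real.log M ^ ((r : ℝ) / 2) := by
    rw [Real.sqrt_eq_rpow, ← Real.rpow_natCast, ← Real.rpow_mul (Real.log_natCast_nonneg M)]
    ring_nf
  calc _ ≤ _ := norm_gradient_realPoly_le (by omega) (fun _ => Real.sqrt_nonneg _) hA hbound hgrad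
    _ ≤ 2 ^ r * r * A * (√12 * √(Real.log M)) ^ r *
          √(∑ kk : TM M, √(1 + ((kk.1 : ℕ) : ℝ) ^ 2) * ‖u kk‖ ^ 2) ^ (r - 1) := by gcongr
    _ = _ := by rw [mul_pow, hlog_pow]; ring
end
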